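/- arXiv:1309.1678 — 7 statements merged into one kernel-verified Lean document; each statement's English description precedes it below -/
import Mathlib

section
/- Let (G,X) be an augmented birack. Then for all indices 1 ≤ j < k ≤ n, the face maps on C_n(X) = ℤ[X^n] satisfy ∂''_j ∘ ∂''_k = ∂''_{k−1} ∘ ∂''_j as maps C_n(X) → C_{n−2}(X). -/
/-- An augmented birack: a set `X` with maps `a, b, abar, bbar : X → Perm X`
(written `α, β, ᾱ, β̄` in the paper) and a kink map `kink = π`, satisfying
the augmented birack axioms. -/
structure AugBirack (X : Type*) where
  a : X → Equiv.Perm X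
  b : X → Equiv.Perm X
  abar : X → Equiv.Perm X
  bbar : X → Equiv.Perm X
  kink : Equiv.Perm X
  axiom_i1 : ∀ x : X, a (kink x) x = b x (kink x)
  axiom_i2 : ∀ x : X, bbar (kink x) x = abar x (kink x)
  axiom_ii1 : ∀ x y : X, abar (b x y) (a y x) = x
  axiom_ii2 : ∀ x y : X, bbar (a x y) (b y x) = x
  axiom_ii3 : ∀ x y : X, a (bbar x y) (abar y x) = x
  axiom_ii4 : ∀ x y : X, b (abar x y) (bbar y x) = x
  axiom_iii1 : ∀ x y z : X, a (a x y) (a x z) = a (b y x) (a y z)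
  axiom_iii2 : ∀ x y z : X, b (a x y) (a x z) = a (b y x) (b y z)
  axiom_iii3 : ∀ x y z : X, b (a x y) (b x z) = b (b y x) (b y z)

/-- The chain group `C_n(X) = ℤ[X^n]`, the free abelian group on `n`-tuples. -/
abbrev ChainGrp (X : Type*) (n : ℕ) : Type _ := FreeAbelianGroup (Fin n → X)

/-- `∂'_k`: delete the `k`-th entry (0-indexed). -/
def faceDel (X : Type*) (n : ℕ) (k : Fin (n + 1)) : ChainGrp X (n + 1) →+ ChainGrp X n :=
  FreeAbelianGroup.map (fun f j => f (k.succAbove j))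

/-- `∂''_k`: delete the `k`-th entry, applying `β_{x_k}` (= `be (f k)`) to earlier
entries and `α_{x_k}` (= `al (f k)`) to later entries (0-indexed). -/
def faceAct {X : Type*} (al be : X → X → X) (n : ℕ) (k : Fin (n + 1)) :
    ChainGrp X (n + 1) →+ ChainGrp X n :=
  FreeAbelianGroup.map (fun f j =>
    if (j : ℕ) < (k : ℕ) then be (f k) (f (k.succAbove j))
    else al (f k) (f (k.succAbove j)))

/-- `∂''_k` for an augmented birack. -/
def faceBir {X : Type*} (B : AugBirack X) (n : ℕ) (k : Fin (n + 1)) :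
    ChainGrp X (n + 1) →+ ChainGrp X n :=
  faceAct (fun x y => B.a x y) (fun x y => B.b x y) n k

/-- The augmented birack boundary map `∂ = Σ (-1)^k (∂'_k - ∂''_k)` (here `k`
runs over `0, …, n`, corresponding to the paper's `1, …, n+1`, whence the
sign `(-1)^(k+1)`). -/
def abBoundary {X : Type*} (B : AugBirack X) (n : ℕ) : ChainGrp X (n + 1) →+ ChainGrp X n :=
  ∑ k : Fin (n + 1), ((-1 : ℤ) ^ ((k : ℕ) + 1)) • (faceDel X n k - faceBir B n k)

/-- For an augmented birack and `j < k` (here `j ≤ k` with the paper's `k`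
being `k.succ`), `∂''_j ∘ ∂''_k = ∂''_{k-1} ∘ ∂''_j`. -/
theorem stmt4 (X : Type*) (B : AugBirack X) (n : ℕ) (j k : Fin (n + 1))
    (h : (j : ℕ) ≤ (k : ℕ)) :
    (faceBir B n j).comp (faceBir B (n + 1) k.succ) =
      (faceBir B n k).comp (faceBir B (n + 1) j.castSucc) := by
  ext f
  simp only [AddMonoidHom.comp_apply, faceBir, faceAct, FreeAbelianGroup.map_of_apply]
  congr 1
  funext i
  have LT : ∀ (p : Fin (n+2)) (m : Fin (n+1)), ((m.castSucc:Fin (n+2)):ℕ) < (p:ℕ) → p.succAbove m = m.castSucc :=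
    fun p m hm => Fin.succAbove_of_castSucc_lt p m (by rwa [Fin.lt_def])
  have GE : ∀ (p : Fin (n+2)) (m : Fin (n+1)), (p:ℕ) ≤ ((m.castSucc:Fin (n+2)):ℕ) → p.succAbove m = m.succ :=
    fun p m hm => Fin.succAbove_of_le_castSucc p m (by rwa [Fin.le_def])
  have LT' : ∀ (p : Fin (n+1)) (m : Fin n), ((m.castSucc:Fin (n+1)):ℕ) < (p:ℕ) → p.succAbove m = m.castSucc :=
    fun p m hm => Fin.succAbove_of_castSucc_lt p m (by rwa [Fin.lt_def])
  have GE' : ∀ (p : Fin (n+1)) (m : Fin n), (p:ℕ) ≤ ((m.castSucc:Fin (n+1)):ℕ) → p.succAbove m = m.succ :=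
    fun p m hm => Fin.succAbove_of_le_castSucc p m (by rwa [Fin.le_def])
  have ejk : k.succ.succAbove j = j.castSucc := LT _ _ (by simp; omega)
  have ekj : j.castSucc.succAbove k = k.succ := GE _ _ (by simp; omega)
  rcases lt_or_ge (i:ℕ) (j:ℕ) with hij | hij
  · -- i < j ≤ k
    have e1 : j.succAbove i = i.castSucc := LT' _ _ (by simp [hij])
    have e2 : k.succAbove i = i.castSucc := LT' _ _ (by simp; omega)
    have e3 : k.succ.succAbove i.castSucc = i.castSucc.castSucc := LT _ _ (by simp; omega)
    have e4 : j.castSucc.succAbove i.castSucc = i.castSucc.castSucc := LT _ _ (by simp [hij])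
    rw [e1, e2, e3, e4, ejk, ekj]
    simp only [Fin.coe_castSucc, Fin.val_succ]
    split_ifs <;> first
      | omega
      | exact (B.axiom_iii3 _ _ _).symm
  · rcases lt_or_ge (i:ℕ) (k:ℕ) with hik | hik
    · -- j ≤ i < k
      have e1 : j.succAbove i = i.succ := GE' _ _ (by simpa using hij)
      have e2 : k.succAbove i = i.castSucc := LT' _ _ (by simpa using hik)
      have e3 : k.succ.succAbove i.succ = i.succ.castSucc := LT _ _ (by simp; omega)
      have e4 : j.castSucc.succAbove i.castSucc = i.succ.castSucc := by
        rw [GE _ _ (by simpa using hij)]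
        exact Fin.succ_castSucc i
      rw [e1, e2, e3, e4, ejk, ekj]
      simp only [Fin.coe_castSucc, Fin.val_succ]
      split_ifs <;> first
        | omega
        | exact (B.axiom_iii2 _ _ _).symm
    · -- j ≤ k ≤ i
      have e1 : j.succAbove i = i.succ := GE' _ _ (by simp; omega)
      have e2 : k.succAbove i = i.succ := GE' _ _ (by simpa using hik)
      have e3 : k.succ.succAbove i.succ = i.succ.succ := GE _ _ (by simp; omega)
      have e4 : j.castSucc.succAbove i.succ = i.succ.succ := GE _ _ (by simp; omega)
      rw [e1, e2, e3, e4, ejk, ekj]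
      simp only [Fin.coe_castSucc, Fin.val_succ]
      split_ifs <;> first
        | omega
        | exact (B.axiom_iii1 _ _ _).symm
end

section
/- Let (G,X) be an augmented birack. Then the map ∂'' : C_n(X) → C_{n−1}(X) defined by ∂''(x⃗) = Σ_{k=1}^{n} (−1)^k ∂''_k(x⃗) is a boundary map, i.e. the composite ∂'' ∘ ∂'' : C_n(X) → C_{n−2}(X) is the zero map. -/
set_option maxRecDepth 4000


/-- `∂'' = Σ (-1)^k ∂''_k`. -/
def delDoublePrime {X : Type*} (B : AugBirack X) (n : ℕ) :
    ChainGrp X (n + 1) →+ ChainGrp X n :=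
  ∑ k : Fin (n + 1), ((-1 : ℤ) ^ ((k : ℕ) + 1)) • faceBir B n k


/-- The simplicial-type commutation relation for the birack face maps. -/
theorem faceBir_comm {X : Type*} (B : AugBirack X) (n : ℕ) (i j : Fin (n + 1)) (hij : i ≤ j) :
    (faceBir B n i).comp (faceBir B (n + 1) j.succ)
      = (faceBir B n j).comp (faceBir B (n + 1) i.castSucc) := by
  unfold faceBir faceAct
  rw [← FreeAbelianGroup.map_comp, ← FreeAbelianGroup.map_comp]
  refine congrArg FreeAbelianGroup.map (funext fun f => funext fun p => ?_)
  have hij' : (i : ℕ) ≤ (j : ℕ) := hij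
  simp only [Function.comp_apply]
  have h2 : j.succ.succAbove i = i.castSucc :=
    Fin.succAbove_of_castSucc_lt _ _ (by simp only [Fin.lt_def, Fin.le_def, Fin.coe_castSucc, Fin.val_succ]; omega)
  have h5 : i.castSucc.succAbove j = j.succ :=
    Fin.succAbove_of_le_castSucc _ _ (by simp only [Fin.lt_def, Fin.le_def, Fin.coe_castSucc, Fin.val_succ]; omega)
  rw [h2, h5]
  rcases lt_or_ge (p : ℕ) (i : ℕ) with hpi | hip
  · have h1 : i.succAbove p = p.castSucc :=
      Fin.succAbove_of_castSucc_lt _ _ (by simp only [Fin.lt_def, Fin.le_def, Fin.coe_castSucc, Fin.val_succ]; omega)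
    have h3 : j.succ.succAbove p.castSucc = p.castSucc.castSucc :=
      Fin.succAbove_of_castSucc_lt _ _ (by simp only [Fin.lt_def, Fin.le_def, Fin.coe_castSucc, Fin.val_succ]; omega)
    have h4 : j.succAbove p = p.castSucc :=
      Fin.succAbove_of_castSucc_lt _ _ (by simp only [Fin.lt_def, Fin.le_def, Fin.coe_castSucc, Fin.val_succ]; omega)
    have h6 : i.castSucc.succAbove p.castSucc = p.castSucc.castSucc :=
      Fin.succAbove_of_castSucc_lt _ _ (by simp only [Fin.lt_def, Fin.le_def, Fin.coe_castSucc, Fin.val_succ]; omega)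
    rw [h1, h4, h3, h6]
    simp only [Fin.coe_castSucc, Fin.val_succ]
    rw [if_pos hpi, if_pos (by omega : (p:ℕ) < (j:ℕ) + 1), if_pos (by omega : (i:ℕ) < (j:ℕ) + 1),
      if_pos (by omega : (p:ℕ) < (j:ℕ)), if_neg (by omega : ¬ ((j:ℕ) < (i:ℕ))),
      if_pos (by omega : (p:ℕ) < (i:ℕ))]
    exact (B.axiom_iii3 (f i.castSucc) (f j.succ) (f p.castSucc.castSucc)).symm
  · rcases lt_or_ge (p : ℕ) (j : ℕ) with hpj | hjp
    · have h1 : i.succAbove p = p.succ :=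
        Fin.succAbove_of_le_castSucc _ _ (by simp only [Fin.lt_def, Fin.le_def, Fin.coe_castSucc, Fin.val_succ]; omega)
      have h3 : j.succ.succAbove p.succ = p.succ.castSucc :=
        Fin.succAbove_of_castSucc_lt _ _ (by simp only [Fin.lt_def, Fin.le_def, Fin.coe_castSucc, Fin.val_succ]; omega)
      have h4 : j.succAbove p = p.castSucc :=
        Fin.succAbove_of_castSucc_lt _ _ (by simp only [Fin.lt_def, Fin.le_def, Fin.coe_castSucc, Fin.val_succ]; omega)
      have h6 : i.castSucc.succAbove p.castSucc = p.castSucc.succ :=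
        Fin.succAbove_of_le_castSucc _ _ (by simp only [Fin.lt_def, Fin.le_def, Fin.coe_castSucc, Fin.val_succ]; omega)
      have h7 : p.succ.castSucc = p.castSucc.succ := by apply Fin.ext; simp
      rw [h1, h4, h3, h6, h7]
      simp only [Fin.coe_castSucc, Fin.val_succ]
      rw [if_neg (by omega : ¬ ((p:ℕ) < (i:ℕ))), if_pos (by omega : (p:ℕ)+1 < (j:ℕ) + 1),
        if_pos (by omega : (i:ℕ) < (j:ℕ) + 1), if_pos (by omega : (p:ℕ) < (j:ℕ)),
        if_neg (by omega : ¬ ((j:ℕ) < (i:ℕ))), if_neg (by omega : ¬ ((p:ℕ) < (i:ℕ)))]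
      exact (B.axiom_iii2 (f i.castSucc) (f j.succ) (f p.castSucc.succ)).symm
    · have h1 : i.succAbove p = p.succ :=
        Fin.succAbove_of_le_castSucc _ _ (by simp only [Fin.lt_def, Fin.le_def, Fin.coe_castSucc, Fin.val_succ]; omega)
      have h3 : j.succ.succAbove p.succ = p.succ.succ :=
        Fin.succAbove_of_le_castSucc _ _ (by simp only [Fin.lt_def, Fin.le_def, Fin.coe_castSucc, Fin.val_succ]; omega)
      have h4 : j.succAbove p = p.succ :=
        Fin.succAbove_of_le_castSucc _ _ (by simp only [Fin.lt_def, Fin.le_def, Fin.coe_castSucc, Fin.val_succ]; omega)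
      have h6 : i.castSucc.succAbove p.succ = p.succ.succ :=
        Fin.succAbove_of_le_castSucc _ _ (by simp only [Fin.lt_def, Fin.le_def, Fin.coe_castSucc, Fin.val_succ]; omega)
      rw [h1, h4, h3, h6]
      simp only [Fin.coe_castSucc, Fin.val_succ]
      rw [if_neg (by omega : ¬ ((p:ℕ) < (i:ℕ))), if_neg (by omega : ¬ ((p:ℕ)+1 < (j:ℕ) + 1)),
        if_pos (by omega : (i:ℕ) < (j:ℕ) + 1), if_neg (by omega : ¬ ((p:ℕ) < (j:ℕ))),
        if_neg (by omega : ¬ ((j:ℕ) < (i:ℕ))), if_neg (by omega : ¬ ((p:ℕ)+1 < (i:ℕ)))]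
      exact (B.axiom_iii1 (f i.castSucc) (f j.succ) (f p.succ.succ)).symm

private lemma sum_comp' {A B C : Type*} [AddCommMonoid A] [AddCommMonoid B] [AddCommMonoid C]
    {ι : Type*} (s : Finset ι) (F : ι → (B →+ C)) (G : A →+ B) :
    (∑ i ∈ s, F i).comp G = ∑ i ∈ s, (F i).comp G := by
  ext x; simp

private lemma comp_sum' {A B C : Type*} [AddCommMonoid A] [AddCommMonoid B] [AddCommMonoid C]
    {ι : Type*} (s : Finset ι) (F : B →+ C) (G : ι → (A →+ B)) :
    F.comp (∑ i ∈ s, G i) = ∑ i ∈ s, F.comp (G i) := by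
  ext x; simp

private lemma smul_comp' {A B C : Type*} [AddCommMonoid A] [AddCommGroup B] [AddCommGroup C]
    (c : ℤ) (F : B →+ C) (G : A →+ B) :
    (c • F).comp G = c • F.comp G := by
  ext x; simp

private lemma comp_smul' {A B C : Type*} [AddCommMonoid A] [AddCommGroup B] [AddCommGroup C]
    (c : ℤ) (F : B →+ C) (G : A →+ B) :
    F.comp (c • G) = c • F.comp G := by
  ext x; simp

/-- For an augmented birack, `∂'' ∘ ∂'' = 0`. -/
theorem stmt5 (X : Type*) (B : AugBirack X) (n : ℕ) :
    (delDoublePrime B n).comp (delDoublePrime B (n + 1)) = 0 := by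
  unfold delDoublePrime
  have expand :
      (∑ i : Fin (n + 1), ((-1 : ℤ) ^ ((i : ℕ) + 1)) • faceBir B n i).comp
        (∑ j : Fin (n + 2), ((-1 : ℤ) ^ ((j : ℕ) + 1)) • faceBir B (n + 1) j)
      = ∑ p : Fin (n + 1) × Fin (n + 2),
          ((-1 : ℤ) ^ ((p.1 : ℕ) + (p.2 : ℕ))) •
            (faceBir B n p.1).comp (faceBir B (n + 1) p.2) := by
    rw [sum_comp', Fintype.sum_prod_type]
    refine Finset.sum_congr rfl fun i _ => ?_
    rw [smul_comp', comp_sum', Finset.smul_sum]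
    refine Finset.sum_congr rfl fun j _ => ?_
    rw [comp_smul', smul_smul, ← pow_add,
      show (i : ℕ) + 1 + ((j : ℕ) + 1) = (i : ℕ) + (j : ℕ) + 2 by ring, pow_add]
    norm_num
  rw [expand]
  refine Finset.sum_involution
    (fun p _ =>
      if h : (p.2 : ℕ) ≤ (p.1 : ℕ) then
        ((⟨(p.2 : ℕ), by omega⟩ : Fin (n + 1)), p.1.succ)
      else ((⟨(p.2 : ℕ) - 1, by omega⟩ : Fin (n + 1)), p.1.castSucc)) ?_ ?_ ?_ ?_
  · rintro ⟨i, j⟩ -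
    by_cases h : (j : ℕ) ≤ (i : ℕ)
    · simp only [dif_pos h]
      have hc := faceBir_comm B n (⟨(j : ℕ), by omega⟩ : Fin (n + 1)) i
        (by simp only [Fin.le_def]; exact h)
      rw [show Fin.castSucc (⟨(j : ℕ), by omega⟩ : Fin (n + 1)) = j from Fin.ext (by simp)] at hc
      have hsign : ((-1 : ℤ)) ^ (((⟨(j : ℕ), by omega⟩ : Fin (n + 1)) : ℕ) + (i.succ : ℕ))
          = -((-1 : ℤ)) ^ ((i : ℕ) + (j : ℕ)) := by
        rw [show ((⟨(j : ℕ), by omega⟩ : Fin (n + 1)) : ℕ) + (i.succ : ℕ)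
            = ((i : ℕ) + (j : ℕ)) + 1 by simp; omega, pow_succ]
        ring
      rw [hc, hsign, neg_smul]
      exact add_neg_cancel _
    · simp only [dif_neg h]
      push_neg at h
      have hc := faceBir_comm B n i (⟨(j : ℕ) - 1, by omega⟩ : Fin (n + 1))
        (by simp only [Fin.le_def]; omega)
      rw [show Fin.succ (⟨(j : ℕ) - 1, by omega⟩ : Fin (n + 1)) = j from Fin.ext (by simp; omega)]
        at hc
      have hsign : ((-1 : ℤ)) ^ (((⟨(j : ℕ) - 1, by omega⟩ : Fin (n + 1)) : ℕ) + (i.castSucc : ℕ))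
          = -((-1 : ℤ)) ^ ((i : ℕ) + (j : ℕ)) := by
        rw [show ((i : ℕ) + (j : ℕ))
            = (((⟨(j : ℕ) - 1, by omega⟩ : Fin (n + 1)) : ℕ) + (i.castSucc : ℕ)) + 1
            by simp; omega, pow_succ]
        ring
      rw [← hc, hsign, neg_smul]
      exact add_neg_cancel _
  · rintro ⟨i, j⟩ - -
    by_cases h : (j : ℕ) ≤ (i : ℕ)
    · simp only [dif_pos h]
      intro hcontra
      have := congrArg (fun q => (q.2 : ℕ)) hcontra
      simp only [Fin.val_succ] at this
      omega
    · simp only [dif_neg h]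
      push_neg at h
      intro hcontra
      have := congrArg (fun q => (q.2 : ℕ)) hcontra
      simp only [Fin.coe_castSucc] at this
      omega
  · intro p _; exact Finset.mem_univ _
  · rintro ⟨i, j⟩ -
    by_cases h : (j : ℕ) ≤ (i : ℕ)
    · simp only [dif_pos h, dif_neg (by simp only [Fin.val_succ]; omega :
        ¬ ((i.succ : ℕ) ≤ ((⟨(j : ℕ), by omega⟩ : Fin (n + 1)) : ℕ)))]
      refine Prod.ext ?_ ?_ <;> apply Fin.ext <;> simp <;> omega
    · push_neg at h
      simp only [dif_neg (not_le.mpr h), dif_pos (by simp only [Fin.coe_castSucc]; omega :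
        ((i.castSucc : ℕ) ≤ ((⟨(j : ℕ) - 1, by omega⟩ : Fin (n + 1)) : ℕ)))]
      refine Prod.ext ?_ ?_ <;> apply Fin.ext <;> simp <;> omega
end

section
/- Let (G,X) be an augmented birack with boundary maps ∂_n on C_n(X) = ℤ[X^n], and let C^n(X) denote the group of ℤ-linear maps C_n(X) → ℤ. Then the map δ^n : C^n(X) → C^{n+1}(X) defined by δ^n(f) = f ∘ ∂_{n+1} is a coboundary map, i.e. δ^{n+1} ∘ δ^n = 0. -/
section auxAB
set_option linter.unnecessarySeqFocus false
variable {X : Type*}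

lemma AB_succAbove_val {m : ℕ} (p : Fin (m+1)) (j : Fin m) :
    ((p.succAbove j : Fin (m+1)) : ℕ) = if (j:ℕ) < (p:ℕ) then (j:ℕ) else (j:ℕ)+1 := by
  rcases lt_or_ge (j:ℕ) (p:ℕ) with h | h
  · rw [Fin.succAbove_of_castSucc_lt _ _ (by simpa [Fin.lt_def] using h)]
    simp [h]
  · rw [Fin.succAbove_of_le_castSucc _ _ (by simpa [Fin.le_def] using h)]
    simp [Nat.not_lt.mpr h]

lemma AB_faceAct_comp (a1 b1 a2 b2 a1' b1' a2' b2' : X → X → X) (n : ℕ)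
    (k : Fin (n+1)) (l : Fin (n+2)) (h : (k:ℕ) < (l:ℕ))
    (H1 : ∀ x y z : X, b1 (b2 y x) (b2 y z) = b2' (a1' x y) (b1' x z))
    (H2 : ∀ x y z : X, a1 (b2 y x) (b2 y z) = b2' (a1' x y) (a1' x z))
    (H3 : ∀ x y z : X, a1 (b2 y x) (a2 y z) = a2' (a1' x y) (a1' x z)) :
    (faceAct a1 b1 n k).comp (faceAct a2 b2 (n+1) l) =
    (faceAct a2' b2' n ⟨(l:ℕ)-1, by omega⟩).comp
      (faceAct a1' b1' (n+1) ⟨(k:ℕ), by omega⟩) := by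
  apply FreeAbelianGroup.lift_ext
  intro f
  simp only [faceAct, AddMonoidHom.comp_apply, FreeAbelianGroup.map_of_apply]
  congr 1
  funext j
  have hl : (l:ℕ) < n+2 := l.isLt
  have hk : (k:ℕ) < n+1 := k.isLt
  have hj : (j:ℕ) < n := j.isLt
  obtain ⟨F, hF⟩ : ∃ F : ℕ → X, ∀ i : Fin (n+2), f i = F (i:ℕ) :=
    ⟨fun m => if hm : m < n+2 then f ⟨m, hm⟩ else f l, fun i => by simp [i.isLt]⟩
  simp only [hF, AB_succAbove_val]
  split_ifs <;>
    first
      | (exfalso; omega)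
      | (rw [H1]; congr <;> omega)
      | (rw [H2]; congr <;> omega)
      | (rw [H3]; congr <;> omega)

lemma AB_faceDel_eq (n : ℕ) (k : Fin (n+1)) :
    faceDel X n k = faceAct (fun _ y => y) (fun _ y => y) n k := by
  simp [faceDel, faceAct]

/-- The key quasi-simplicial identity for `∂' - ∂''`. -/
lemma AB_key (B : AugBirack X) (n : ℕ) (k : Fin (n+1)) (l : Fin (n+2))
    (h : (k:ℕ) < (l:ℕ)) :
    (faceDel X n k - faceBir B n k).comp (faceDel X (n+1) l - faceBir B (n+1) l) =
    (faceDel X n ⟨(l:ℕ)-1, by omega⟩ - faceBir B n ⟨(l:ℕ)-1, by omega⟩).comp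
      (faceDel X (n+1) ⟨(k:ℕ), by omega⟩ - faceBir B (n+1) ⟨(k:ℕ), by omega⟩) := by
  have T1 := AB_faceAct_comp (X := X) (fun _ y => y) (fun _ y => y) (fun _ y => y)
    (fun _ y => y) (fun _ y => y) (fun _ y => y) (fun _ y => y) (fun _ y => y) n k l h
    (fun _ _ _ => rfl) (fun _ _ _ => rfl) (fun _ _ _ => rfl)
  have T2 := AB_faceAct_comp (X := X) (fun _ y => y) (fun _ y => y)
    (fun x y => B.a x y) (fun x y => B.b x y) (fun _ y => y) (fun _ y => y)
    (fun x y => B.a x y) (fun x y => B.b x y) n k l h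
    (fun _ _ _ => rfl) (fun _ _ _ => rfl) (fun _ _ _ => rfl)
  have T3 := AB_faceAct_comp (X := X) (fun x y => B.a x y) (fun x y => B.b x y)
    (fun _ y => y) (fun _ y => y) (fun x y => B.a x y) (fun x y => B.b x y)
    (fun _ y => y) (fun _ y => y) n k l h
    (fun _ _ _ => rfl) (fun _ _ _ => rfl) (fun _ _ _ => rfl)
  have T4 := AB_faceAct_comp (X := X) (fun x y => B.a x y) (fun x y => B.b x y)
    (fun x y => B.a x y) (fun x y => B.b x y) (fun x y => B.a x y) (fun x y => B.b x y)
    (fun x y => B.a x y) (fun x y => B.b x y) n k l h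
    (fun x y z => (B.axiom_iii3 x y z).symm)
    (fun x y z => (B.axiom_iii2 x y z).symm)
    (fun x y z => (B.axiom_iii1 x y z).symm)
  simp only [AddMonoidHom.sub_comp, AddMonoidHom.comp_sub, faceBir, AB_faceDel_eq]
  rw [T1, T2, T3, T4]
  abel

lemma AB_sum_comp {ι M N P : Type*} [AddCommMonoid M] [AddCommMonoid N] [AddCommMonoid P]
    (s : Finset ι) (g : ι → (N →+ P)) (h : M →+ N) :
    (∑ i ∈ s, g i).comp h = ∑ i ∈ s, (g i).comp h := by
  ext x; simp

lemma AB_comp_sum {ι M N P : Type*} [AddCommMonoid M] [AddCommMonoid N] [AddCommMonoid P]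
    (s : Finset ι) (g : N →+ P) (h : ι → (M →+ N)) :
    g.comp (∑ i ∈ s, h i) = ∑ i ∈ s, g.comp (h i) := by
  ext x; simp

lemma AB_smul_comp {M N P : Type*} [AddCommMonoid M] [AddCommGroup N] [AddCommGroup P]
    (c : ℤ) (g : N →+ P) (h : M →+ N) : (c • g).comp h = c • g.comp h := by
  ext x; simp

lemma AB_comp_smul {M N P : Type*} [AddCommMonoid M] [AddCommGroup N] [AddCommGroup P]
    (c : ℤ) (g : N →+ P) (h : M →+ N) : g.comp (c • h) = c • g.comp h := by
  ext x; simp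

lemma AB_bd_sq (B : AugBirack X) (n : ℕ) :
    (abBoundary B n).comp (abBoundary B (n + 1)) = 0 := by
  unfold abBoundary
  simp only [AB_sum_comp, AB_comp_sum, AB_smul_comp, AB_comp_smul, Finset.smul_sum, smul_smul]
  rw [← Finset.sum_product']
  refine Finset.sum_ninvolution
    (fun p => if h : (p.2:ℕ) < (p.1:ℕ) then
        ((⟨(p.2:ℕ), by omega⟩ : Fin (n+2)), (⟨(p.1:ℕ)-1, by omega⟩ : Fin (n+1)))
      else
        ((⟨(p.2:ℕ)+1, by omega⟩ : Fin (n+2)),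
          (⟨(p.1:ℕ), by have := p.1.isLt; have := p.2.isLt; omega⟩ : Fin (n+1))))
    ?_ ?_ (fun _ => Finset.mem_univ _) ?_
  · rintro ⟨l, k⟩
    by_cases h : (k:ℕ) < (l:ℕ)
    · simp only [dif_pos h]
      rw [← AB_key B n k l h]
      have hc : ((-1:ℤ)^((l:ℕ)+1) * (-1)^((k:ℕ)+1)
          + (-1)^((k:ℕ)+1) * (-1)^(((l:ℕ)-1)+1)) = 0 := by
        have h1 : (l:ℕ)-1+1 = (l:ℕ) := by omega
        rw [h1, pow_succ ((-1:ℤ)) (l:ℕ)]; ring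
      rw [← add_smul, hc, zero_smul]
    · simp only [dif_neg h]
      have h' : ((⟨(l:ℕ), by have := k.isLt; have := l.isLt; omega⟩ : Fin (n+1)):ℕ)
          < ((⟨(k:ℕ)+1, by omega⟩ : Fin (n+2)):ℕ) := by simp; omega
      have e := AB_key B n _ _ h'
      rw [show (⟨((⟨(k:ℕ)+1, by omega⟩ : Fin (n+2)):ℕ)-1, by omega⟩ : Fin (n+1)) = k from
          Fin.ext (by simp), show (⟨((⟨(l:ℕ), by have := k.isLt; have := l.isLt; omega⟩ :
          Fin (n+1)):ℕ), by omega⟩ : Fin (n+2)) = l from Fin.ext (by simp)] at e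
      rw [e]
      have hc : ((-1:ℤ)^((l:ℕ)+1) * (-1)^((k:ℕ)+1)
          + (-1)^(((k:ℕ)+1)+1) * (-1)^((l:ℕ)+1)) = 0 := by
        rw [pow_succ ((-1:ℤ)) ((k:ℕ)+1)]; ring
      rw [← add_smul, hc, zero_smul]
  · rintro ⟨l, k⟩ - heq
    by_cases h : (k:ℕ) < (l:ℕ) <;>
      · apply_fun (fun p => ((p.1 : Fin (n+2)):ℕ)) at heq
        simp [h] at heq
        omega
  · rintro ⟨l, k⟩
    by_cases h : (k:ℕ) < (l:ℕ) <;>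
      · refine Prod.ext (Fin.ext ?_) (Fin.ext ?_) <;>
        · simp only [h, dite_true, dite_false, dif_pos, dif_neg, not_false_iff]
          split_ifs <;> simp <;> omega
end auxAB

/-- The coboundary `δ f = f ∘ ∂` on cochains `C^n(X) = Hom(C_n(X), ℤ)`
satisfies `δ ∘ δ = 0`. -/
theorem stmt7 (X : Type*) (B : AugBirack X) (n : ℕ) (f : ChainGrp X n →+ ℤ) :
    ((f.comp (abBoundary B n)).comp (abBoundary B (n + 1))) = 0 := by
  rw [AddMonoidHom.comp_assoc, AB_bd_sq, AddMonoidHom.comp_zero]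
end

section
/- Let (G,X) be an augmented birack whose kink map π satisfies π^N = 1 (the identity bijection) for a positive integer N. Let C^D_n(X) ⊆ C_n(X) be the subgroup generated by all elements of the form Σ_{k=1}^{N} (x₁,…,x_{j−1}, π^k(x_j), π^{k−1}(x_j), x_{j+2},…,xₙ) for 1 ≤ j ≤ n−1 and x₁,…,xₙ ∈ X. Then the N-degenerate chains form a subcomplex of (C_n(X), ∂_n): for every v ∈ C^D_n(X), ∂_n(v) ∈ C^D_{n−1}(X). -/
/-- The set of generators of the `N`-degenerate chains: elements
`Σ_{k=1}^N (x₁,…,x_{j-1}, π^k(x_j), π^{k-1}(x_j), x_{j+2},…,x_n)`. -/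
def degenSet {X : Type*} (B : AugBirack X) (N n : ℕ) : Set (ChainGrp X n) :=
  {v | ∃ (j : ℕ) (hj : j + 1 < n) (f : Fin n → X),
    v = ∑ k ∈ Finset.range N, FreeAbelianGroup.of (fun i : Fin n =>
      if (i : ℕ) = j then (B.kink ^ (k + 1)) (f ⟨j, by omega⟩)
      else if (i : ℕ) = j + 1 then (B.kink ^ k) (f ⟨j, by omega⟩)
      else f i)}

namespace AugBirack
variable {X : Type*} (B : AugBirack X)

lemma a_kink (x : X) : B.a (B.kink x) = B.a x := by
  ext z
  have h := B.axiom_iii1 (B.kink x) x z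
  rw [B.axiom_i1] at h
  exact (B.a (B.b x (B.kink x))).injective h

lemma b_kink (y : X) : B.b (B.kink y) = B.b y := by
  ext z
  have h := B.axiom_iii3 (B.kink y) y z
  rw [B.axiom_i1] at h
  exact (B.b (B.b y (B.kink y))).injective h

lemma kink_ab (z : X) : B.b z (B.kink z) = B.a z z := by
  rw [← B.axiom_i1, a_kink]

lemma kink_a (c x : X) : B.kink (B.a c x) = B.a c (B.kink x) := by
  have h1 := B.kink_ab (B.a c x)
  have h2 := B.axiom_iii1 c x x
  have h3 := B.axiom_iii2 c x (B.kink x)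
  rw [kink_ab] at h3
  exact (B.b (B.a c x)).injective (by rw [h1, h2, ← h3])

lemma kink_b (c x : X) : B.kink (B.b c x) = B.b c (B.kink x) := by
  have h1 := B.kink_ab (B.b c x)
  have h2 := B.axiom_iii2 x c x
  have h3 := B.axiom_iii3 x c (B.kink x)
  rw [kink_ab] at h3
  exact (B.b (B.b c x)).injective (by rw [h1, ← h2, h3])

lemma a_kpow (m : ℕ) (x : X) : B.a ((B.kink ^ m) x) = B.a x := by
  induction m with
  | zero => simp
  | succ m ih => rw [pow_succ', Equiv.Perm.mul_apply, a_kink, ih]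

lemma b_kpow (m : ℕ) (x : X) : B.b ((B.kink ^ m) x) = B.b x := by
  induction m with
  | zero => simp
  | succ m ih => rw [pow_succ', Equiv.Perm.mul_apply, b_kink, ih]

lemma kpow_a (c : X) (m : ℕ) (x : X) :
    (B.kink ^ m) (B.a c x) = B.a c ((B.kink ^ m) x) := by
  induction m with
  | zero => rfl
  | succ m ih =>
      rw [pow_succ', Equiv.Perm.mul_apply, Equiv.Perm.mul_apply, ih, ← kink_a]

lemma kpow_b (c : X) (m : ℕ) (x : X) :
    (B.kink ^ m) (B.b c x) = B.b c ((B.kink ^ m) x) := by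
  induction m with
  | zero => rfl
  | succ m ih =>
      rw [pow_succ', Equiv.Perm.mul_apply, Equiv.Perm.mul_apply, ih, ← kink_b]

/-- the `k`-th tuple in a degenerate generator -/
def dtup (j n : ℕ) (f : Fin n → X) (hjn : j < n) (k : ℕ) : Fin n → X :=
  fun i => if (i : ℕ) = j then (B.kink ^ (k + 1)) (f ⟨j, hjn⟩)
    else if (i : ℕ) = j + 1 then (B.kink ^ k) (f ⟨j, hjn⟩)
    else f i

lemma degen_mem (N j n : ℕ) (hj : j + 1 < n) (f : Fin n → X) (hjn : j < n) :
    (∑ k ∈ Finset.range N, FreeAbelianGroup.of (B.dtup j n f hjn k)) ∈ degenSet B N n :=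
  ⟨j, hj, f, rfl⟩

lemma coe_succAbove {n : ℕ} (i : Fin (n+1)) (p : Fin n) :
    ((i.succAbove p : Fin (n+1)) : ℕ) = if (p:ℕ) < (i:ℕ) then (p:ℕ) else (p:ℕ)+1 := by
  rw [Fin.succAbove]
  split_ifs with h1 h2 h2 <;> simp_all [Fin.lt_def]

lemma faceDel_eq_faceAct (n : ℕ) (k : Fin (n+1)) :
    faceDel X n k = faceAct (fun _ y => y) (fun _ y => y) n k := by
  unfold faceDel faceAct
  congr 1
  funext f p
  exact (ite_self _).symm

lemma sideMem (al be : X → X → X)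
    (hal : ∀ c m y, al c ((B.kink ^ m) y) = (B.kink ^ m) (al c y))
    (hbe : ∀ c m y, be c ((B.kink ^ m) y) = (B.kink ^ m) (be c y))
    (N n j : ℕ) (hj : j + 1 < n + 1) (hjn : j < n + 1) (f : Fin (n+1) → X) (i : Fin (n+1))
    (hi : (i:ℕ) < j ∨ j + 1 < (i:ℕ)) :
    faceAct al be n i (∑ k ∈ Finset.range N, FreeAbelianGroup.of (B.dtup j (n+1) f hjn k))
      ∈ AddSubgroup.closure (degenSet B N n) := by
  rw [map_sum]
  simp only [faceAct, FreeAbelianGroup.map_of_apply]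
  apply AddSubgroup.subset_closure
  have hin : (i:ℕ) ≤ n := Nat.lt_succ_iff.mp i.isLt
  obtain ⟨hd1, hd2⟩ : (i:ℕ) ≠ j ∧ (i:ℕ) ≠ j + 1 := by rcases hi with h | h <;> omega
  have hgi : ∀ k, B.dtup j (n+1) f hjn k i = f i := fun k => by
    simp only [dtup]
    rw [if_neg hd1, if_neg hd2]
  rcases hi with hlt | hgt
  · refine ⟨j-1, by omega, fun p => if (p:ℕ) < (i:ℕ) then be (f i) (f (i.succAbove p))
        else al (f i) (f (i.succAbove p)), ?_⟩
    refine Finset.sum_congr rfl fun k _ => congrArg FreeAbelianGroup.of (funext fun p => ?_)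
    have hsa := coe_succAbove i p
    have key : ∀ q : Fin n, (q:ℕ) = j - 1 →
        (if (q:ℕ) < (i:ℕ) then be (f i) (f (i.succAbove q)) else al (f i) (f (i.succAbove q)))
          = al (f i) (f ⟨j, hjn⟩) := by
      intro q hq
      rw [if_neg (by omega)]
      exact congrArg (al (f i)) (congrArg f (Fin.ext (by
        rw [coe_succAbove, if_neg (by omega)]; show _ = j; omega)))
    simp only [hgi]
    rw [key ⟨j-1, by omega⟩ rfl]
    by_cases h1 : (p:ℕ) = j - 1
    · rw [if_pos h1, if_neg (by omega : ¬ (p:ℕ) < (i:ℕ))]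
      have hq : ((i.succAbove p : Fin (n+1)):ℕ) = j := by
        rw [hsa, if_neg (by omega)]; omega
      simp only [dtup]
      rw [hq, if_pos rfl]
      exact hal (f i) (k+1) (f ⟨j, hjn⟩)
    · by_cases h2 : (p:ℕ) = j - 1 + 1
      · rw [if_neg h1, if_pos h2, if_neg (by omega : ¬ (p:ℕ) < (i:ℕ))]
        have hq : ((i.succAbove p : Fin (n+1)):ℕ) = j + 1 := by
          rw [hsa, if_neg (by omega)]; omega
        simp only [dtup]
        rw [hq, if_neg (by omega), if_pos rfl]
        exact hal (f i) k (f ⟨j, hjn⟩)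
      · rw [if_neg h1, if_neg h2]
        have hq : B.dtup j (n+1) f hjn k (i.succAbove p) = f (i.succAbove p) := by
          simp only [dtup]
          rw [if_neg (by rw [hsa]; split_ifs <;> omega),
              if_neg (by rw [hsa]; split_ifs <;> omega)]
        rw [hq]
  · refine ⟨j, by omega, fun p => if (p:ℕ) < (i:ℕ) then be (f i) (f (i.succAbove p))
        else al (f i) (f (i.succAbove p)), ?_⟩
    refine Finset.sum_congr rfl fun k _ => congrArg FreeAbelianGroup.of (funext fun p => ?_)
    have hsa := coe_succAbove i p
    have key : ∀ q : Fin n, (q:ℕ) = j →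
        (if (q:ℕ) < (i:ℕ) then be (f i) (f (i.succAbove q)) else al (f i) (f (i.succAbove q)))
          = be (f i) (f ⟨j, hjn⟩) := by
      intro q hq
      rw [if_pos (by omega)]
      exact congrArg (be (f i)) (congrArg f (Fin.ext (by
        rw [coe_succAbove, if_pos (by omega)]; show _ = j; omega)))
    simp only [hgi]
    rw [key ⟨j, by omega⟩ rfl]
    by_cases h1 : (p:ℕ) = j
    · rw [if_pos h1, if_pos (by omega : (p:ℕ) < (i:ℕ))]
      have hq : ((i.succAbove p : Fin (n+1)):ℕ) = j := by
        rw [hsa, if_pos (by omega)]; omega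
      simp only [dtup]
      rw [hq, if_pos rfl]
      exact hbe (f i) (k+1) (f ⟨j, hjn⟩)
    · by_cases h2 : (p:ℕ) = j + 1
      · rw [if_neg h1, if_pos h2, if_pos (by omega : (p:ℕ) < (i:ℕ))]
        have hq : ((i.succAbove p : Fin (n+1)):ℕ) = j + 1 := by
          rw [hsa, if_pos (by omega)]; omega
        simp only [dtup]
        rw [hq, if_neg (by omega), if_pos rfl]
        exact hbe (f i) k (f ⟨j, hjn⟩)
      · rw [if_neg h1, if_neg h2]
        have hq : B.dtup j (n+1) f hjn k (i.succAbove p) = f (i.succAbove p) := by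
          simp only [dtup]
          rw [if_neg (by rw [hsa]; split_ifs <;> omega),
              if_neg (by rw [hsa]; split_ifs <;> omega)]
        rw [hq]

def mtup (j n : ℕ) (f : Fin (n+1) → X) (hjn : j < n+1) (m : ℕ) : Fin n → X :=
  fun p => if (p:ℕ) = j then (B.kink ^ m) (f ⟨j, hjn⟩)
    else if (p:ℕ) < j then f p.castSucc else f p.succ

def btup (j n : ℕ) (f : Fin (n+1) → X) (hjn : j < n+1) (k : ℕ) : Fin n → X :=
  fun p => if (p:ℕ) = j then (B.kink ^ k) (B.a (f ⟨j, hjn⟩) (f ⟨j, hjn⟩))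
    else if (p:ℕ) < j then B.b (f ⟨j, hjn⟩) (f p.castSucc)
    else B.a (f ⟨j, hjn⟩) (f p.succ)

lemma del_tup (j n : ℕ) (f : Fin (n+1) → X) (hjn : j < n+1) (k : ℕ) (i : Fin (n+1))
    (hij : (i:ℕ) = j) :
    (fun p : Fin n => B.dtup j (n+1) f hjn k (i.succAbove p)) = B.mtup j n f hjn k := by
  funext p
  have hsa := coe_succAbove i p
  by_cases hp : (p:ℕ) < j
  · have hq : ((i.succAbove p : Fin (n+1)):ℕ) = (p:ℕ) := by rw [hsa, if_pos (by omega)]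
    simp only [dtup, mtup, hq]
    split_ifs <;> first
      | rfl | omega
      | exact congrArg f (Fin.ext (by rw [hq, Fin.coe_castSucc]))
      | exact congrArg f (Fin.ext (by rw [hq, Fin.val_succ]))
  · have hq : ((i.succAbove p : Fin (n+1)):ℕ) = (p:ℕ) + 1 := by rw [hsa, if_neg (by omega)]
    simp only [dtup, mtup, hq]
    split_ifs <;> first
      | rfl | omega
      | exact congrArg f (Fin.ext (by rw [hq, Fin.coe_castSucc]))
      | exact congrArg f (Fin.ext (by rw [hq, Fin.val_succ]))

lemma del_tup' (j n : ℕ) (f : Fin (n+1) → X) (hjn : j < n+1) (k : ℕ) (i : Fin (n+1))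
    (hij : (i:ℕ) = j + 1) :
    (fun p : Fin n => B.dtup j (n+1) f hjn k (i.succAbove p)) = B.mtup j n f hjn (k+1) := by
  funext p
  have hsa := coe_succAbove i p
  by_cases hp : (p:ℕ) < j + 1
  · have hq : ((i.succAbove p : Fin (n+1)):ℕ) = (p:ℕ) := by rw [hsa, if_pos (by omega)]
    simp only [dtup, mtup, hq]
    split_ifs <;> first
      | rfl | omega
      | exact congrArg f (Fin.ext (by rw [hq, Fin.coe_castSucc]))
      | exact congrArg f (Fin.ext (by rw [hq, Fin.val_succ]))
  · have hq : ((i.succAbove p : Fin (n+1)):ℕ) = (p:ℕ) + 1 := by rw [hsa, if_neg (by omega)]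
    simp only [dtup, mtup, hq]
    split_ifs <;> first
      | rfl | omega
      | exact congrArg f (Fin.ext (by rw [hq, Fin.coe_castSucc]))
      | exact congrArg f (Fin.ext (by rw [hq, Fin.val_succ]))

lemma bir_tup (j n : ℕ) (f : Fin (n+1) → X) (hjn : j < n+1) (k : ℕ) (i : Fin (n+1))
    (hij : (i:ℕ) = j) :
    (fun p : Fin n => if (p:ℕ) < (i:ℕ)
        then B.b (B.dtup j (n+1) f hjn k i) (B.dtup j (n+1) f hjn k (i.succAbove p))
        else B.a (B.dtup j (n+1) f hjn k i) (B.dtup j (n+1) f hjn k (i.succAbove p)))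
      = B.btup j n f hjn k := by
  have hgi : B.dtup j (n+1) f hjn k i = (B.kink ^ (k+1)) (f ⟨j, hjn⟩) := by
    simp only [dtup]; rw [if_pos hij]
  funext p
  have hsa := coe_succAbove i p
  rw [hgi, B.b_kpow, B.a_kpow]
  by_cases hp : (p:ℕ) < j
  · have hq : ((i.succAbove p : Fin (n+1)):ℕ) = (p:ℕ) := by rw [hsa, if_pos (by omega)]
    simp only [dtup, btup, hq]
    split_ifs <;> first
      | rfl | omega
      | exact congrArg (B.b (f ⟨j, hjn⟩)) (congrArg f (Fin.ext (by rw [hq, Fin.coe_castSucc])))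
      | exact congrArg (B.a (f ⟨j, hjn⟩)) (congrArg f (Fin.ext (by rw [hq, Fin.val_succ])))
  · have hq : ((i.succAbove p : Fin (n+1)):ℕ) = (p:ℕ) + 1 := by rw [hsa, if_neg (by omega)]
    simp only [dtup, btup, hq]
    split_ifs <;> first
      | rfl | omega
      | exact (B.kpow_a (f ⟨j, hjn⟩) k (f ⟨j, hjn⟩)).symm
      | exact congrArg (B.b (f ⟨j, hjn⟩)) (congrArg f (Fin.ext (by rw [hq, Fin.coe_castSucc])))
      | exact congrArg (B.a (f ⟨j, hjn⟩)) (congrArg f (Fin.ext (by rw [hq, Fin.val_succ])))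

lemma bir_tup' (j n : ℕ) (f : Fin (n+1) → X) (hjn : j < n+1) (k : ℕ) (i : Fin (n+1))
    (hij : (i:ℕ) = j + 1) :
    (fun p : Fin n => if (p:ℕ) < (i:ℕ)
        then B.b (B.dtup j (n+1) f hjn k i) (B.dtup j (n+1) f hjn k (i.succAbove p))
        else B.a (B.dtup j (n+1) f hjn k i) (B.dtup j (n+1) f hjn k (i.succAbove p)))
      = B.btup j n f hjn k := by
  have hgi : B.dtup j (n+1) f hjn k i = (B.kink ^ k) (f ⟨j, hjn⟩) := by
    simp only [dtup]; rw [if_neg (by omega), if_pos hij]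
  funext p
  have hsa := coe_succAbove i p
  rw [hgi, B.b_kpow, B.a_kpow]
  by_cases hp : (p:ℕ) < j + 1
  · have hq : ((i.succAbove p : Fin (n+1)):ℕ) = (p:ℕ) := by rw [hsa, if_pos (by omega)]
    simp only [dtup, btup, hq]
    split_ifs <;> first
      | rfl | omega
      | exact (by rw [pow_succ, Equiv.Perm.mul_apply, ← B.kpow_b, B.kink_ab])
      | exact congrArg (B.b (f ⟨j, hjn⟩)) (congrArg f (Fin.ext (by rw [hq, Fin.coe_castSucc])))
      | exact congrArg (B.a (f ⟨j, hjn⟩)) (congrArg f (Fin.ext (by rw [hq, Fin.val_succ])))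
  · have hq : ((i.succAbove p : Fin (n+1)):ℕ) = (p:ℕ) + 1 := by rw [hsa, if_neg (by omega)]
    simp only [dtup, btup, hq]
    split_ifs <;> first
      | rfl | omega
      | exact congrArg (B.b (f ⟨j, hjn⟩)) (congrArg f (Fin.ext (by rw [hq, Fin.coe_castSucc])))
      | exact congrArg (B.a (f ⟨j, hjn⟩)) (congrArg f (Fin.ext (by rw [hq, Fin.val_succ])))

lemma midDel (N n j : ℕ) (hpi : B.kink ^ N = 1) (hj : j + 1 < n + 1) (hjn : j < n+1)
    (f : Fin (n+1) → X) :
    faceDel X n ⟨j, hjn⟩ (∑ k ∈ Finset.range N, FreeAbelianGroup.of (B.dtup j (n+1) f hjn k))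
      = faceDel X n ⟨j+1, hj⟩
        (∑ k ∈ Finset.range N, FreeAbelianGroup.of (B.dtup j (n+1) f hjn k)) := by
  rw [map_sum, map_sum]
  simp only [faceDel, FreeAbelianGroup.map_of_apply]
  have h1 : ∀ k, (fun p : Fin n => B.dtup j (n+1) f hjn k ((⟨j, hjn⟩ : Fin (n+1)).succAbove p))
      = B.mtup j n f hjn k := fun k => B.del_tup j n f hjn k ⟨j, hjn⟩ rfl
  have h2 : ∀ k, (fun p : Fin n => B.dtup j (n+1) f hjn k ((⟨j+1, hj⟩ : Fin (n+1)).succAbove p))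
      = B.mtup j n f hjn (k+1) := fun k => B.del_tup' j n f hjn k ⟨j+1, hj⟩ rfl
  simp only [h1, h2]
  have hm : B.mtup j n f hjn N = B.mtup j n f hjn 0 := by
    funext p; simp [mtup, hpi]
  have h3 := Finset.sum_range_succ (fun k => FreeAbelianGroup.of (B.mtup j n f hjn k)) N
  have h4 := Finset.sum_range_succ' (fun k => FreeAbelianGroup.of (B.mtup j n f hjn k)) N
  rw [hm] at h3
  exact add_right_cancel (h3.symm.trans h4)

lemma midBir (N n j : ℕ) (hj : j + 1 < n + 1) (hjn : j < n+1) (f : Fin (n+1) → X) :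
    faceBir B n ⟨j, hjn⟩ (∑ k ∈ Finset.range N, FreeAbelianGroup.of (B.dtup j (n+1) f hjn k))
      = faceBir B n ⟨j+1, hj⟩
        (∑ k ∈ Finset.range N, FreeAbelianGroup.of (B.dtup j (n+1) f hjn k)) := by
  rw [map_sum, map_sum]
  simp only [faceBir, faceAct, FreeAbelianGroup.map_of_apply]
  refine Finset.sum_congr rfl fun k _ => congrArg FreeAbelianGroup.of ?_
  rw [B.bir_tup j n f hjn k ⟨j, hjn⟩ rfl, B.bir_tup' j n f hjn k ⟨j+1, hj⟩ rfl]

lemma assemble {M : Type*} [AddCommGroup M] (H : AddSubgroup M) (n j : ℕ)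
    (hj : j + 1 < n + 1) (hjn : j < n + 1) (D Bq : Fin (n+1) → M)
    (hside : ∀ i : Fin (n+1), (i:ℕ) < j ∨ j + 1 < (i:ℕ) → D i ∈ H ∧ Bq i ∈ H)
    (hD : D ⟨j, hjn⟩ = D ⟨j+1, hj⟩) (hB : Bq ⟨j, hjn⟩ = Bq ⟨j+1, hj⟩) :
    ∑ i : Fin (n+1), ((-1:ℤ)^((i:ℕ)+1)) • (D i - Bq i) ∈ H := by
  have hne : (⟨j+1, hj⟩ : Fin (n+1)) ∈ Finset.univ.erase (⟨j, hjn⟩ : Fin (n+1)) :=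
    Finset.mem_erase.mpr ⟨by simp [Fin.ext_iff], Finset.mem_univ _⟩
  rw [← Finset.sum_erase_add _ _ (Finset.mem_univ (⟨j, hjn⟩ : Fin (n+1))),
      ← Finset.sum_erase_add _ _ hne, add_assoc]
  refine AddSubgroup.add_mem H (AddSubgroup.sum_mem H ?_) ?_
  · intro i hi
    simp only [Finset.mem_erase] at hi
    have hv1 : (i:ℕ) ≠ j + 1 := fun h => hi.1 (Fin.ext h)
    have hv2 : (i:ℕ) ≠ j := fun h => hi.2.1 (Fin.ext h)
    obtain ⟨hDm, hBm⟩ := hside i (by omega)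
    exact AddSubgroup.zsmul_mem H (AddSubgroup.sub_mem H hDm hBm) _
  · rw [← hD, ← hB,
      show (((⟨j+1, hj⟩ : Fin (n+1)) : ℕ)) = j + 1 from rfl,
      show (((⟨j, hjn⟩ : Fin (n+1)) : ℕ)) = j from rfl,
      show ((-1:ℤ)^(j+1+1)) = -((-1:ℤ)^(j+1)) by ring, neg_smul, neg_add_cancel]
    exact AddSubgroup.zero_mem H

lemma boundary_degen (N n j : ℕ) (hpi : B.kink ^ N = 1) (hj : j + 1 < n + 1)
    (hjn : j < n + 1) (f : Fin (n+1) → X) :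
    abBoundary B n (∑ k ∈ Finset.range N, FreeAbelianGroup.of (B.dtup j (n+1) f hjn k))
      ∈ AddSubgroup.closure (degenSet B N n) := by
  rw [abBoundary, AddMonoidHom.finset_sum_apply]
  simp only [AddMonoidHom.smul_apply, AddMonoidHom.sub_apply]
  apply assemble _ n j hj hjn
  · intro i hi
    constructor
    · rw [faceDel_eq_faceAct]
      exact B.sideMem _ _ (fun c m y => rfl) (fun c m y => rfl) N n j hj hjn f i hi
    · exact B.sideMem _ _ (fun c m y => (B.kpow_a c m y).symm)
        (fun c m y => (B.kpow_b c m y).symm) N n j hj hjn f i hi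
  · exact B.midDel N n j hpi hj hjn f
  · exact B.midBir N n j hj hjn f

end AugBirack

/-- If `π^N = 1`, the `N`-degenerate chains form a subcomplex: the boundary of
an `N`-degenerate chain is `N`-degenerate. -/
theorem stmt8 (X : Type*) (B : AugBirack X) (N : ℕ) (hN : 0 < N)
    (hpi : B.kink ^ N = 1) (n : ℕ) (v : ChainGrp X (n + 1))
    (hv : v ∈ AddSubgroup.closure (degenSet B N (n + 1))) :
    abBoundary B n v ∈ AddSubgroup.closure (degenSet B N n) := by
  refine AddSubgroup.closure_induction
    (p := fun w _ => abBoundary B n w ∈ AddSubgroup.closure (degenSet B N n))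
    (fun w hw => ?_)
    (by show abBoundary B n 0 ∈ _; rw [map_zero]; exact AddSubgroup.zero_mem _)
    (fun y z _ _ hy hz => by
      show abBoundary B n (y + z) ∈ _
      rw [map_add]; exact AddSubgroup.add_mem _ hy hz)
    (fun y _ hy => by
      show abBoundary B n (-y) ∈ _
      rw [map_neg]; exact AddSubgroup.neg_mem _ hy) hv
  obtain ⟨j, hj, f, rfl⟩ := hw
  exact B.boundary_degen N n j hpi hj (by omega) f
end

section
/- Let R be a commutative ring, let t, r ∈ R be units, and let s ∈ R satisfy s² = (1 − t^{−1}r)s. Let X be an R-module. Then the maps defined by α_x(y) = ry, β_y(x) = tx − tsy, ᾱ_y(x) = r^{−1}x, β̄_x(y) = sr^{−1}x + t^{−1}y, and π(x) = (t^{−1}r + s)x give an augmented birack structure on X: each of the maps α_x, β_x, ᾱ_x, β̄_x, π is a bijection of X, and they satisfy (i) α_{π(x)}(x) = β_x(π(x)) and β̄_{π(x)}(x) = ᾱ_x(π(x)) for all x ∈ X; (ii) ᾱ_{β_x(y)}(α_y(x)) = x, β̄_{α_x(y)}(β_y(x)) = x, α_{β̄_x(y)}(ᾱ_y(x)) = x,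 and β_{ᾱ_x(y)}(β̄_y(x)) = x for all x, y ∈ X; and (iii) α_{α_x(y)} ∘ α_x = α_{β_y(x)} ∘ α_y, β_{α_x(y)} ∘ α_x = α_{β_y(x)} ∘ β_y, and β_{α_x(y)} ∘ β_x = β_{β_y(x)} ∘ β_y for all x, y ∈ X. -/
/-- `α_x(y) = r y`. -/
def tsrA {R : Type*} [CommRing R] (r : Rˣ) {X : Type*} [AddCommGroup X] [Module R X]
    (_x y : X) : X := (r : R) • y

/-- `β_y(x) = t x - t s y`. -/
def tsrB {R : Type*} [CommRing R] (t : Rˣ) (s : R) {X : Type*} [AddCommGroup X]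
    [Module R X] (y x : X) : X := (t : R) • x - ((t : R) * s) • y

/-- `ᾱ_y(x) = r⁻¹ x`. -/
def tsrAbar {R : Type*} [CommRing R] (r : Rˣ) {X : Type*} [AddCommGroup X] [Module R X]
    (_y x : X) : X := ((r⁻¹ : Rˣ) : R) • x

/-- `β̄_x(y) = s r⁻¹ x + t⁻¹ y`. -/
def tsrBbar {R : Type*} [CommRing R] (t r : Rˣ) (s : R) {X : Type*} [AddCommGroup X]
    [Module R X] (x y : X) : X := (s * ((r⁻¹ : Rˣ) : R)) • x + ((t⁻¹ : Rˣ) : R) • y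

/-- `π(x) = (t⁻¹ r + s) x`. -/
def tsrPi {R : Type*} [CommRing R] (t r : Rˣ) (s : R) {X : Type*} [AddCommGroup X]
    [Module R X] (x : X) : X := (((t⁻¹ : Rˣ) : R) * (r : R) + s) • x

/-- The `(t,s,r)`-maps give an augmented birack structure on any module over
`R` when `s² = (1 - t⁻¹ r) s`: all maps are bijections and the augmented
birack axioms (i), (ii), (iii) hold. -/
theorem stmt12 (R : Type*) [CommRing R] (t r : Rˣ) (s : R)
    (hs : s ^ 2 = (1 - ((t⁻¹ : Rˣ) : R) * (r : R)) * s)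
    (X : Type*) [AddCommGroup X] [Module R X] :
    (∀ x : X, Function.Bijective (tsrA r x)) ∧
    (∀ y : X, Function.Bijective (tsrB t s y)) ∧
    (∀ y : X, Function.Bijective (tsrAbar r y)) ∧
    (∀ x : X, Function.Bijective (tsrBbar t r s x)) ∧
    Function.Bijective (tsrPi t r s (X := X)) ∧
    (∀ x : X, tsrA r (tsrPi t r s x) x = tsrB t s x (tsrPi t r s x)) ∧
    (∀ x : X, tsrBbar t r s (tsrPi t r s x) x = tsrAbar r x (tsrPi t r s x)) ∧
    (∀ x y : X, tsrAbar r (tsrB t s x y) (tsrA r y x) = x) ∧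
    (∀ x y : X, tsrBbar t r s (tsrA r x y) (tsrB t s y x) = x) ∧
    (∀ x y : X, tsrA r (tsrBbar t r s x y) (tsrAbar r y x) = x) ∧
    (∀ x y : X, tsrB t s (tsrAbar r x y) (tsrBbar t r s y x) = x) ∧
    (∀ x y z : X, tsrA r (tsrA r x y) (tsrA r x z) = tsrA r (tsrB t s y x) (tsrA r y z)) ∧
    (∀ x y z : X, tsrB t s (tsrA r x y) (tsrA r x z) = tsrA r (tsrB t s y x) (tsrB t s y z)) ∧
    (∀ x y z : X, tsrB t s (tsrA r x y) (tsrB t s x z) = tsrB t s (tsrB t s y x) (tsrB t s y z)) := by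
  set t' := ((t : Rˣ) : R) with ht'
  set ti := ((t⁻¹ : Rˣ) : R) with hti
  set r' := ((r : Rˣ) : R) with hr'
  set ri := ((r⁻¹ : Rˣ) : R) with hri
  have h1 : t' * ti = 1 := by simp [ht', hti]
  have h2 : r' * ri = 1 := by simp [hr', hri]
  have hinv : ∀ c : R, (∃ d : R, c * d = 1) →
      Function.Bijective (fun x : X => c • x) := by
    rintro c ⟨d, hcd⟩
    have hdc : d * c = 1 := by rw [mul_comm]; exact hcd
    refine Function.bijective_iff_has_inverse.mpr ⟨fun x => d • x, ?_, ?_⟩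
    · intro x; simp [smul_smul, hdc]
    · intro x; simp [smul_smul, hcd]
  refine ⟨?_, ?_, ?_, ?_, ?_, ?_, ?_, ?_, ?_, ?_, ?_, ?_, ?_, ?_⟩
  · intro x
    exact hinv _ ⟨ri, h2⟩
  · intro y
    refine Function.bijective_iff_has_inverse.mpr
      ⟨fun x => ti • x + s • y, ?_, ?_⟩ <;> intro x <;>
      simp only [tsrB, ← ht', smul_add, smul_sub, smul_smul] <;>
      match_scalars <;>
      first
        | ring1
        | linear_combination h1
        | linear_combination (-1 : R) * h1
        | linear_combination (-1 - s) * h1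
        | linear_combination s * h1
        | linear_combination (-2 * s) * h1
        | linear_combination (2 * s) * h1
        | linear_combination (-s) * h1
  · intro y
    exact hinv _ ⟨r', by linear_combination h2⟩
  · intro x
    refine Function.bijective_iff_has_inverse.mpr
      ⟨fun y => t' • y - (t' * s * ri) • x, ?_, ?_⟩ <;> intro y <;>
      simp only [tsrBbar, ← ht', ← hti, ← hri, smul_add, smul_sub, smul_smul] <;>
      match_scalars <;>
      first
        | ring1
        | linear_combination h1
        | linear_combination (-1 : R) * h1
        | linear_combination (s * ri) * h1
        | linear_combination (s * ri * t' - s * ri) * h1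
        | linear_combination (-(s * ri)) * h1
  · refine hinv _ ⟨t' * ri * (1 - s), ?_⟩
    simp only [tsrPi, ← hti, ← hr']
    linear_combination (r' * ri) * h1 + h2 - (t' * ri) * hs
  · intro x
    simp only [tsrA, tsrB, tsrPi, ← ht', ← hti, ← hr']
    match_scalars
    first
      | linear_combination (-r' : R) * h1
      | linear_combination r' * h1
  · intro x
    simp only [tsrBbar, tsrAbar, tsrPi, ← ht', ← hti, ← hr', ← hri, smul_add, smul_smul]
    match_scalars
    first
      | linear_combination (s * ri * ti * r' - s * ri) * h1 + (s * ti) * h2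
      | linear_combination (s * ri - s * ri * ti * r') * h1 + (-(s * ti)) * h2
      | linear_combination (s * ri - s * ri * ti * r') * h1 + (-(s * ti)) * h2 - ri * hs
      | linear_combination (s * ri * ti * r' - s * ri) * h1 + (s * ti) * h2 + ri * hs
      | linear_combination (s * ri - s * ri * ti * r') * h1 + (-(s * ti) - ti) * h2
      | linear_combination ri * hs - ti * h2
  · intro x y
    simp only [tsrAbar, tsrA, ← hr', ← hri, smul_smul]
    match_scalars <;>
    first
      | ring1
      | linear_combination h2
      | linear_combination (-1 : R) * h2
  · intro x y
    simp only [tsrBbar, tsrA, tsrB, ← ht', ← hti, ← hr', ← hri, smul_add, smul_sub, smul_smul]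
    match_scalars <;>
    first
      | ring1
      | linear_combination (-1 - s) * h1 + s * h2
      | linear_combination (1 + ti * s) * h1 + (-(s * ri)) * h2
      | linear_combination (1 - s) * h1 + s * h2
      | linear_combination (2 - 2 * s) * h1 + (2 * s) * h2
      | linear_combination s * h2 - s * h1
      | linear_combination h1
      | linear_combination (-1 : R) * h1
  · intro x y
    simp only [tsrA, tsrAbar, ← hr', ← hri, smul_smul]
    match_scalars <;>
    first
      | ring1
      | linear_combination h2
      | linear_combination (-1 : R) * h2
  · intro x y
    simp only [tsrB, tsrBbar, tsrAbar, ← ht', ← hti, ← hr', ← hri, smul_add, smul_sub,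
      smul_smul]
    match_scalars <;>
    first
      | ring1
      | linear_combination h1
      | linear_combination (-1 : R) * h1
  · intro x y z
    simp only [tsrA, smul_smul]
  · intro x y z
    simp only [tsrA, tsrB, ← ht', ← hr', smul_sub, smul_smul]
    match_scalars <;> ring1
  · intro x y z
    simp only [tsrA, tsrB, ← ht', ← hr', smul_sub, smul_smul]
    match_scalars <;>
    first
      | ring1
      | linear_combination (t' * r' * s) * h1 - t' ^ 2 * hs
      | linear_combination (-(t' * r' * s)) * h1 + t' ^ 2 * hs
end

section
/- Let (G,X) be an augmented birack in which α_x is the identity map of X for every x ∈ X. Then the binary operation x ▷ y = β_y^{−1}(x) makes X into a rack: for each y ∈ X the map x ↦ x ▷ y is a bijection of X, and for all x, y, z ∈ X, (x ▷ y) ▷ z = (x ▷ z) ▷ (y ▷ z). -/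
/-- If `α_x = id` for all `x`, then `x ▷ y = β_y⁻¹(x)` is a rack operation:
right translations are bijective and `▷` is right self-distributive. -/
theorem stmt14 (X : Type*) (B : AugBirack X) (hA : ∀ x y : X, B.a x y = y) :
    (∀ y : X, Function.Bijective (fun x : X => (B.b y)⁻¹ x)) ∧
    (∀ x y z : X, (B.b z)⁻¹ ((B.b y)⁻¹ x) =
      (B.b ((B.b z)⁻¹ y))⁻¹ ((B.b z)⁻¹ x)) := by
  constructor
  · intro y; exact (B.b y)⁻¹.bijective
  · intro x y z
    set u := (B.b z)⁻¹ y with hu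
    have hy : B.b z u = y := by simp [hu]
    have key : ∀ w, B.b z (B.b u w) = B.b y (B.b z w) := by
      intro w
      have h := B.axiom_iii3 u z w
      rw [hA] at h
      rw [h, hy]
    have h2 := key ((B.b u)⁻¹ ((B.b z)⁻¹ x))
    rw [show (B.b u) ((B.b u)⁻¹ ((B.b z)⁻¹ x)) = (B.b z)⁻¹ x from (B.b u).apply_symm_apply _] at h2
    simp only [Equiv.Perm.inv_def] at h2 ⊢
    simp only [Equiv.apply_symm_apply] at h2
    rw [h2]; simp
    exact h2
end

section
/- Let (G,X) be an augmented birack. Then the map B : X × X → X × X defined by B(x,y) = (β_x^{−1}(y), α_{β_x^{−1}(y)}(x)) is a bijection of X × X and satisfies the set-theoretic Yang–Baxter equation: (B × id) ∘ (id × B) ∘ (B × id) = (id × B) ∘ (B × id) ∘ (id × B) as maps X × X × X → X × X × X. -/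
/-- The birack map `B(x,y) = (β_x⁻¹(y), α_{β_x⁻¹(y)}(x))`. -/
def birackMap {X : Type*} (B : AugBirack X) (p : X × X) : X × X :=
  ((B.b p.1)⁻¹ p.2, B.a ((B.b p.1)⁻¹ p.2) p.1)

/-- `B × id` acting on triples. -/
def birackMap12 {X : Type*} (B : AugBirack X) (p : X × X × X) : X × X × X :=
  ((birackMap B (p.1, p.2.1)).1, (birackMap B (p.1, p.2.1)).2, p.2.2)

/-- `id × B` acting on triples. -/
def birackMap23 {X : Type*} (B : AugBirack X) (p : X × X × X) : X × X × X :=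
  (p.1, birackMap B p.2)

/-- The birack map is a bijection satisfying the set-theoretic Yang–Baxter
equation `(B × id) ∘ (id × B) ∘ (B × id) = (id × B) ∘ (B × id) ∘ (id × B)`. -/
theorem stmt16 (X : Type*) (B : AugBirack X) :
    Function.Bijective (birackMap B) ∧
    (birackMap12 B) ∘ (birackMap23 B) ∘ (birackMap12 B) =
      (birackMap23 B) ∘ (birackMap12 B) ∘ (birackMap23 B) := by
  refine ⟨?_, ?_⟩
  · rw [Function.bijective_iff_has_inverse]
    exact ⟨fun p => ((B.a p.1)⁻¹ p.2, B.b ((B.a p.1)⁻¹ p.2) p.1),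
      fun ⟨x, y⟩ => by simp [birackMap],
      fun ⟨u, v⟩ => by simp [birackMap]⟩
  · funext ⟨x, y, z⟩
    simp only [Function.comp_apply, birackMap12, birackMap23, birackMap]
    set u := (B.b x)⁻¹ y with hu
    set w := (B.b (B.a u x))⁻¹ z with hwdef
    set s := (B.b u)⁻¹ w with hsdef
    set p := (B.b y)⁻¹ z with hpdef
    set q := (B.b x)⁻¹ p with hqdef
    set r := (B.b (B.a q x))⁻¹ (B.a p y) with hrdef
    have hy : B.b x u = y := by rw [hu]; exact Equiv.apply_symm_apply _ _
    have hz1 : B.b (B.a u x) w = z := by rw [hwdef]; exact Equiv.apply_symm_apply _ _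
    have hw : B.b u s = w := by rw [hsdef]; exact Equiv.apply_symm_apply _ _
    have hp : B.b y p = z := by rw [hpdef]; exact Equiv.apply_symm_apply _ _
    have hq : B.b x q = p := by rw [hqdef]; exact Equiv.apply_symm_apply _ _
    have hiii3 := B.axiom_iii3 u x s
    rw [hw, hy, hz1] at hiii3
    -- hiii3 : z = B.b y (B.b x s)
    have h1 : B.b x s = p := (B.b y).injective (by rw [hp, ← hiii3])
    have hsq : s = q := (B.b x).injective (by rw [h1, hq])
    have hiii2 := B.axiom_iii2 s x u
    rw [h1, hy] at hiii2
    -- hiii2 : B.b (B.a s x) (B.a s u) = B.a p y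
    have hr0 : B.b (B.a q x) r = B.a p y := by
      rw [hrdef]; exact Equiv.apply_symm_apply _ _
    have hr : r = B.a s u := by
      apply (B.b (B.a q x)).injective
      rw [hr0, ← hsq, hiii2]
    have h3 : B.a w (B.a u x) = B.a r (B.a q x) := by
      rw [hr, ← hsq]
      have hiii1 := B.axiom_iii1 s u x
      rw [hw] at hiii1
      exact hiii1.symm
    exact Prod.ext hsq (Prod.ext hr.symm h3)
end
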